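/- arXiv:2201.08634 — 8 statements merged into one kernel-verified Lean document; each statement's English description precedes it below -/
import Mathlib

section
/- For every integer n ≥ 2, the real vector v = (5n² + 4n, 3n² + 2nα_n, 3n + 2α_n, n(2 + n − α_n)) satisfies A_n v = (2n − 1 + 2α_n) v; that is, v is an eigenvector of A_n with eigenvalue 2n − 1 + 2α_n. -/
/-!
Each coordinate of `A_n v - λ v` is a polynomial multiple of `α² - n(n-1)`, so the eigenvector
identity holds for every square root `α` of `n(n-1)`. The real square root is one as soon as
`n(n-1) ≥ 0`, which holds for every integer `n`.
-/

open Matrix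

noncomputable def Amat (n : ℤ) : Matrix (Fin 4) (Fin 4) ℝ :=
  !![5*(n:ℝ)+5,  -(n:ℝ),    -2*(n:ℝ), -12*(n:ℝ)-12;
     5*(n:ℝ),    1-(n:ℝ),   -2*(n:ℝ), -12*(n:ℝ);
     5,          -1,        -1,       -12;
     2,          0,         0,        -5]

theorem Int.mul_sub_one_self_nonneg (n : ℤ) : 0 ≤ n * (n - 1) := by
  rcases le_or_gt n 0 with h | h <;> nlinarith

theorem Amat_mulVec_of_sq_eq (n : ℤ) {s : ℝ} (hs : s ^ 2 = n * (n - 1)) :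
    Amat n *ᵥ ![5*(n:ℝ)^2 + 4*(n:ℝ), 3*(n:ℝ)^2 + 2*(n:ℝ)*s, 3*(n:ℝ) + 2*s, (n:ℝ)*(2 + (n:ℝ) - s)]
      = (2*(n:ℝ) - 1 + 2*s) • ![5*(n:ℝ)^2 + 4*(n:ℝ), 3*(n:ℝ)^2 + 2*(n:ℝ)*s, 3*(n:ℝ) + 2*s,
          (n:ℝ)*(2 + (n:ℝ) - s)] := by
  ext i
  fin_cases i <;>
    simp only [Amat, mulVec, dotProduct, Fin.sum_univ_four, of_apply, cons_val', cons_val_fin_one,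
      cons_val, cons_val_zero, cons_val_one, Fin.zero_eta, Fin.mk_one, Fin.reduceFinMk, Fin.isValue,
      Pi.smul_apply, smul_eq_mul]
  -- `s²` only enters through `2s • v`, so each multiplier is `-2` times the `s`-coefficient of `vᵢ`.
  · ring
  · linear_combination (-4 * (n:ℝ)) * hs
  · linear_combination (-4) * hs
  · linear_combination (2 * (n:ℝ)) * hs

theorem statement_2_general (n : ℤ) :
    (Amat n).mulVec
      ![5*(n:ℝ)^2 + 4*(n:ℝ),
        3*(n:ℝ)^2 + 2*(n:ℝ)*Real.sqrt ((n:ℝ)*((n:ℝ)-1)),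
        3*(n:ℝ) + 2*Real.sqrt ((n:ℝ)*((n:ℝ)-1)),
        (n:ℝ)*(2 + (n:ℝ) - Real.sqrt ((n:ℝ)*((n:ℝ)-1)))]
    = (2*(n:ℝ) - 1 + 2*Real.sqrt ((n:ℝ)*((n:ℝ)-1))) •
      ![5*(n:ℝ)^2 + 4*(n:ℝ),
        3*(n:ℝ)^2 + 2*(n:ℝ)*Real.sqrt ((n:ℝ)*((n:ℝ)-1)),
        3*(n:ℝ) + 2*Real.sqrt ((n:ℝ)*((n:ℝ)-1)),
        (n:ℝ)*(2 + (n:ℝ) - Real.sqrt ((n:ℝ)*((n:ℝ)-1)))] := by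
  have hnonneg : (0 : ℝ) ≤ n * (n - 1) := by exact_mod_cast Int.mul_sub_one_self_nonneg n
  exact Amat_mulVec_of_sq_eq n (Real.sq_sqrt hnonneg)

/-- For every integer `n ≥ 2`, the vector
`v = (5n² + 4n, 3n² + 2nα_n, 3n + 2α_n, n(2 + n − α_n))` (with `α_n = √(n(n−1))`)
is an eigenvector of `A_n` with eigenvalue `2n − 1 + 2α_n`. -/
theorem statement_2 (n : ℤ) (hn : 2 ≤ n) :
    (Amat n).mulVec
      ![5*(n:ℝ)^2 + 4*(n:ℝ),
        3*(n:ℝ)^2 + 2*(n:ℝ)*Real.sqrt ((n:ℝ)*((n:ℝ)-1)),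
        3*(n:ℝ) + 2*Real.sqrt ((n:ℝ)*((n:ℝ)-1)),
        (n:ℝ)*(2 + (n:ℝ) - Real.sqrt ((n:ℝ)*((n:ℝ)-1)))]
    = (2*(n:ℝ) - 1 + 2*Real.sqrt ((n:ℝ)*((n:ℝ)-1))) •
      ![5*(n:ℝ)^2 + 4*(n:ℝ),
        3*(n:ℝ)^2 + 2*(n:ℝ)*Real.sqrt ((n:ℝ)*((n:ℝ)-1)),
        3*(n:ℝ) + 2*Real.sqrt ((n:ℝ)*((n:ℝ)-1)),
        (n:ℝ)*(2 + (n:ℝ) - Real.sqrt ((n:ℝ)*((n:ℝ)-1)))] :=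
  statement_2_general n
end

section
/- For every integer n and every integer k ≥ 0, the integers d_{n,k}, a_{n,k}, b_{n,k}, c_{n,k} satisfy d_{n,k} = a_{n,k} + 2c_{n,k} and a_{n,k} = 1 + n·b_{n,k}. -/
/-!
Both identities are values of linear functionals that `A_n` fixes from the left:
`(1, -1, 0, -2) A_n = (1, -1, 0, -2)` and `(0, 1, -n, 0) A_n = (0, 1, -n, 0)`.
Hence `ℓ (A_nᵏ v) = ℓ v` for each of them, and evaluating at `v = (1, 1, 0, 0)` gives `0` and `1`.
-/

open Matrix

/-- The matrix `A_n` with integer entries. -/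
def AmatZ (n : ℤ) : Matrix (Fin 4) (Fin 4) ℤ :=
  !![5*n+5, -n,  -2*n, -12*n-12;
     5*n,   1-n, -2*n, -12*n;
     5,     -1,  -1,   -12;
     2,     0,   0,    -5]

/-- `(d_{n,k}, a_{n,k}, b_{n,k}, c_{n,k})ᵀ = A_nᵏ (1, 1, 0, 0)ᵀ`. -/
def dabc (n : ℤ) (k : ℕ) : Fin 4 → ℤ := (AmatZ n ^ k).mulVec ![1, 1, 0, 0]

theorem Matrix.dotProduct_pow_mulVec_of_vecMul_eq {ι R : Type*} [Fintype ι] [DecidableEq ι]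
    [Semiring R] {A : Matrix ι ι R} {u : ι → R} (hu : u ᵥ* A = u) (k : ℕ) (v : ι → R) :
    u ⬝ᵥ (A ^ k *ᵥ v) = u ⬝ᵥ v := by
  induction k with
  | zero => simp
  | succ k ih => rw [pow_succ', ← mulVec_mulVec, dotProduct_mulVec, hu, ih]

lemma AmatZ_leftFixed_d_sub_a_sub_two_c (n : ℤ) : ![1, -1, 0, -2] ᵥ* AmatZ n = ![1, -1, 0, -2] := by
  ext i; fin_cases i <;> simp [AmatZ, vecMul, dotProduct, Fin.sum_univ_four] <;> ring

lemma AmatZ_leftFixed_a_sub_n_b (n : ℤ) : ![0, 1, -n, 0] ᵥ* AmatZ n = ![0, 1, -n, 0] := by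
  ext i; fin_cases i <;> simp [AmatZ, vecMul, dotProduct, Fin.sum_univ_four] <;> ring

/-- For every integer `n` and every `k ≥ 0`:
`d_{n,k} = a_{n,k} + 2c_{n,k}` and `a_{n,k} = 1 + n·b_{n,k}`. -/
theorem statement_4 (n : ℤ) (k : ℕ) :
    dabc n k 0 = dabc n k 1 + 2 * dabc n k 3 ∧
    dabc n k 1 = 1 + n * dabc n k 2 := by
  have hd : ![1, -1, 0, -2] ⬝ᵥ dabc n k = ![1, -1, 0, -2] ⬝ᵥ ![1, 1, 0, 0] :=
    dotProduct_pow_mulVec_of_vecMul_eq (AmatZ_leftFixed_d_sub_a_sub_two_c n) k _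
  have hr : ![0, 1, -n, 0] ⬝ᵥ dabc n k = ![0, 1, -n, 0] ⬝ᵥ ![1, 1, 0, 0] :=
    dotProduct_pow_mulVec_of_vecMul_eq (AmatZ_leftFixed_a_sub_n_b n) k _
  simp only [dotProduct, Fin.sum_univ_four, cons_val_zero, cons_val_one, cons_val, one_mul,
    neg_mul, zero_mul, mul_one, mul_zero, add_zero, zero_add] at hd hr
  constructor <;> linarith
end

section
/- For every integer n ≥ 2 and every integer k ≥ 1, one has b_{n,k} > c_{n,k} ≥ 0, and consequently a_{n,k} > 2. -/
/-!
Two linear combinations of the coordinates are invariant along the orbit: `d = n b + 2 c + 1`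
and `a = n b + 1`. Substituting them, `(b, c)` follows the affine recurrence
`b' = (4n - 1) b - 2 c + 4`, `c' = 2 n b - c + 2` starting from `(4, 2)` at `k = 1`, and for
`n ≥ 2` the region `c + 2 ≤ b, 2 ≤ c` is stable under it. Then `a = n b + 1 ≥ 9`.
-/

open Matrix

lemma AmatZ_mulVec (n : ℤ) (v : Fin 4 → ℤ) :
    AmatZ n *ᵥ v =
      ![(5*n+5) * v 0 - n * v 1 - 2*n * v 2 - (12*n+12) * v 3,
        5*n * v 0 + (1-n) * v 1 - 2*n * v 2 - 12*n * v 3,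
        5 * v 0 - v 1 - v 2 - 12 * v 3,
        2 * v 0 - 5 * v 3] := by
  ext i
  fin_cases i <;> simp [AmatZ, mulVec, dotProduct, Fin.sum_univ_four] <;> ring

lemma dabc_zero (n : ℤ) : dabc n 0 = ![1, 1, 0, 0] := by
  simp [dabc]

lemma dabc_succ (n : ℤ) (k : ℕ) : dabc n (k + 1) = AmatZ n *ᵥ dabc n k := by
  rw [dabc, pow_succ', ← mulVec_mulVec, dabc]

lemma dabc_invariants (n : ℤ) (k : ℕ) :
    dabc n k 0 = n * dabc n k 2 + 2 * dabc n k 3 + 1 ∧ dabc n k 1 = n * dabc n k 2 + 1 := by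
  induction k with
  | zero => simp [dabc_zero]
  | succ k ih =>
    obtain ⟨hd, ha⟩ := ih
    simp only [dabc_succ, AmatZ_mulVec, cons_val]
    constructor
    · linear_combination hd
    · linear_combination ha

lemma dabc_succ_two (n : ℤ) (k : ℕ) :
    dabc n (k + 1) 2 = (4*n - 1) * dabc n k 2 - 2 * dabc n k 3 + 4 := by
  obtain ⟨hd, ha⟩ := dabc_invariants n k
  simp only [dabc_succ, AmatZ_mulVec, cons_val]
  linear_combination 5 * hd - ha

lemma dabc_succ_three (n : ℤ) (k : ℕ) :
    dabc n (k + 1) 3 = 2*n * dabc n k 2 - dabc n k 3 + 2 := by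
  obtain ⟨hd, -⟩ := dabc_invariants n k
  simp only [dabc_succ, AmatZ_mulVec, cons_val]
  linear_combination 2 * hd

lemma dabc_bounds (n : ℤ) (hn : 2 ≤ n) {k : ℕ} (hk : 1 ≤ k) :
    dabc n k 3 + 2 ≤ dabc n k 2 ∧ 2 ≤ dabc n k 3 := by
  induction k, hk using Nat.le_induction with
  | base => simp [dabc_succ_two, dabc_succ_three, dabc_zero]
  | succ k _ ih =>
    obtain ⟨hbc, hc⟩ := ih
    have hnb : 2 * dabc n k 2 ≤ n * dabc n k 2 := by nlinarith
    rw [dabc_succ_two, dabc_succ_three]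
    constructor <;> linarith

/-- For every integer `n ≥ 2` and every integer `k ≥ 1`:
`b_{n,k} > c_{n,k} ≥ 0`, and consequently `a_{n,k} > 2`. -/
theorem statement_5 (n : ℤ) (hn : 2 ≤ n) (k : ℕ) (hk : 1 ≤ k) :
    dabc n k 2 > dabc n k 3 ∧ dabc n k 3 ≥ 0 ∧ dabc n k 1 > 2 := by
  obtain ⟨hbc, hc⟩ := dabc_bounds n hn hk
  obtain ⟨-, ha⟩ := dabc_invariants n k
  have hnb : 2 * dabc n k 2 ≤ n * dabc n k 2 := by nlinarith
  refine ⟨by linarith, by linarith, by linarith⟩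
end

section
/- For every integer n ≥ 2, the ratios of the sequence (d_{n,k}, a_{n,k}, b_{n,k}, c_{n,k}) converge as k → ∞ to the corresponding ratios of the dominant eigenvector: lim_{k→∞} a_{n,k}/d_{n,k} = n(3n + 2α_n)/(5n² + 4n), lim_{k→∞} b_{n,k}/d_{n,k} = (3n + 2α_n)/(5n² + 4n), and lim_{k→∞} c_{n,k}/d_{n,k} = n(2 + n − α_n)/(5n² + 4n). -/
open Matrix Filter

/-! `A_n` has the eigenvalues `λ = 2n - 1 + 2α_n` and `μ = 2n - 1 - 2α_n`, with eigenvectors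
`u_± = (n² + 2n ± nα_n, n² ± nα_n, n ± α_n, n)`, and the eigenvalue `1` with eigenvector
`e = (3, 1, 1, 1)`. Since `2n(n-1) (1, 1, 0, 0) = u_+ + u_- - 2n e`, we get
`2n(n-1) A_nᵏ (1, 1, 0, 0) = λᵏ u_+ + μᵏ u_- - 2n e`. For `n ≥ 2` we have `λ > 1` and
`|μ| < λ`, so the term `λᵏ u_+` dominates and the coordinate ratios tend to those of `u_+`. -/

theorem Matrix.pow_mulVec_of_mulVec_eq_smul {ι R : Type*} [Fintype ι] [DecidableEq ι]
    [CommRing R] {A : Matrix ι ι R} {v : ι → R} {c : R} (h : A *ᵥ v = c • v) (k : ℕ) :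
    A ^ k *ᵥ v = c ^ k • v := by
  induction k with
  | zero => simp
  | succ k ih => rw [pow_succ', ← mulVec_mulVec, ih, mulVec_smul, h, smul_smul, pow_succ]

theorem tendsto_pow_mul_add_pow_mul_sub_div_pow {l m : ℝ} (hl : 1 < |l|) (hm : |m| < |l|)
    (a b z : ℝ) :
    Tendsto (fun k : ℕ => (l ^ k * a + m ^ k * b - z) / l ^ k) atTop (nhds a) := by
  have hl0 : l ≠ 0 := abs_pos.mp (one_pos.trans hl)
  have hml : Tendsto (fun k : ℕ => (m / l) ^ k) atTop (nhds 0) :=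
    tendsto_pow_atTop_nhds_zero_of_abs_lt_one (by rwa [abs_div, div_lt_one (one_pos.trans hl)])
  have hinv : Tendsto (fun k : ℕ => l⁻¹ ^ k) atTop (nhds 0) :=
    tendsto_pow_atTop_nhds_zero_of_abs_lt_one (by rwa [abs_inv, inv_lt_one₀ (one_pos.trans hl)])
  have hlim := (tendsto_const_nhds (x := a)).add (hml.mul_const b) |>.sub (hinv.mul_const z)
  rw [zero_mul, zero_mul, add_zero, sub_zero] at hlim
  refine hlim.congr fun k => ?_
  rw [div_pow, inv_pow]
  field_simp

theorem tendsto_apply_div_apply_of_smul_eq {ι : Type*} {x : ℕ → ι → ℝ} {c l m : ℝ}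
    {u w z : ι → ℝ} (hc : c ≠ 0) (hl : 1 < |l|) (hm : |m| < |l|)
    (hx : ∀ k, c • x k = l ^ k • u + m ^ k • w - z) (i j : ι) (hj : u j ≠ 0) :
    Tendsto (fun k => x k i / x k j) atTop (nhds (u i / u j)) := by
  have hcoord (i : ι) : Tendsto (fun k => c * x k i / l ^ k) atTop (nhds (u i)) := by
    refine (tendsto_pow_mul_add_pow_mul_sub_div_pow hl hm (u i) (w i) (z i)).congr fun k => ?_
    simpa using congrFun (hx k) i |>.symm |> congrArg (· / l ^ k)
  refine ((hcoord i).div (hcoord j) hj).congr fun k => ?_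
  have hlk : l ^ k ≠ 0 := pow_ne_zero _ (abs_pos.mp (one_pos.trans hl))
  rw [Pi.div_apply, div_div_div_cancel_right₀ hlk, mul_div_mul_left _ _ hc]

def AmatR (n : ℤ) : Matrix (Fin 4) (Fin 4) ℝ := (AmatZ n).map (Int.castRingHom ℝ)

def eigenvec (N s : ℝ) : Fin 4 → ℝ := ![N^2 + 2*N + N*s, N^2 + N*s, N + s, N]

theorem dabc_cast_eq_pow_mulVec (n : ℤ) (k : ℕ) :
    (fun i => (dabc n k i : ℝ)) = AmatR n ^ k *ᵥ ![1, 1, 0, 0] := by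
  ext i
  rw [← eq_intCast (Int.castRingHom ℝ), dabc, RingHom.map_mulVec, ← RingHom.mapMatrix_apply,
    map_pow, RingHom.mapMatrix_apply, AmatR]
  congr 1
  funext j
  fin_cases j <;> simp

theorem AmatR_mulVec_eigenvec (n : ℤ) {s : ℝ} (hs : s ^ 2 = n * (n - 1)) :
    AmatR n *ᵥ eigenvec n s = (2*n - 1 + 2*s) • eigenvec n s := by
  ext i
  fin_cases i <;> simp [AmatR, AmatZ, eigenvec, mulVec, dotProduct, Fin.sum_univ_four]
  · linear_combination (-2*(n:ℝ)) * hs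
  · linear_combination (-2*(n:ℝ)) * hs
  · linear_combination (-2:ℝ) * hs
  · ring

theorem AmatR_mulVec_fixed (n : ℤ) : AmatR n *ᵥ ![3, 1, 1, 1] = ![3, 1, 1, 1] := by
  ext i
  fin_cases i <;> simp [AmatR, AmatZ, mulVec, dotProduct, Fin.sum_univ_four] <;> ring

theorem smul_dabc_eq (n : ℤ) {s : ℝ} (hs : s ^ 2 = n * (n - 1)) (k : ℕ) :
    (2*n*(n - 1) : ℝ) • (fun i => (dabc n k i : ℝ)) =
      (2*n - 1 + 2*s) ^ k • eigenvec n s + (2*n - 1 - 2*s) ^ k • eigenvec n (-s)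
        - (2*n : ℝ) • ![3, 1, 1, 1] := by
  have hinit : (2*n*(n - 1) : ℝ) • ![(1:ℝ), 1, 0, 0] =
      eigenvec n s + eigenvec n (-s) - (2*n : ℝ) • ![3, 1, 1, 1] := by
    ext i
    fin_cases i <;> simp [eigenvec] <;> ring
  have hμ : AmatR n *ᵥ eigenvec n (-s) = (2*n - 1 - 2*s) • eigenvec n (-s) := by
    rw [AmatR_mulVec_eigenvec n (by rwa [neg_sq])]
    congr 1
    ring
  rw [dabc_cast_eq_pow_mulVec, ← mulVec_smul, hinit, mulVec_sub, mulVec_add, mulVec_smul,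
    pow_mulVec_of_mulVec_eq_smul (AmatR_mulVec_eigenvec n hs),
    pow_mulVec_of_mulVec_eq_smul hμ,
    pow_mulVec_of_mulVec_eq_smul (c := 1) (by simpa using AmatR_mulVec_fixed n), one_pow, one_smul]

/-- For every integer `n ≥ 2`, with `α_n = √(n(n−1))`, the ratios
`a_{n,k}/d_{n,k}`, `b_{n,k}/d_{n,k}`, `c_{n,k}/d_{n,k}` converge as `k → ∞`
to the corresponding ratios of the dominant eigenvector. -/
theorem statement_8 (n : ℤ) (hn : 2 ≤ n) :
    Tendsto (fun k : ℕ => (dabc n k 1 : ℝ) / (dabc n k 0 : ℝ)) atTop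
      (nhds ((n:ℝ) * (3*(n:ℝ) + 2*Real.sqrt ((n:ℝ)*((n:ℝ)-1))) / (5*(n:ℝ)^2 + 4*(n:ℝ)))) ∧
    Tendsto (fun k : ℕ => (dabc n k 2 : ℝ) / (dabc n k 0 : ℝ)) atTop
      (nhds ((3*(n:ℝ) + 2*Real.sqrt ((n:ℝ)*((n:ℝ)-1))) / (5*(n:ℝ)^2 + 4*(n:ℝ)))) ∧
    Tendsto (fun k : ℕ => (dabc n k 3 : ℝ) / (dabc n k 0 : ℝ)) atTop
      (nhds ((n:ℝ) * (2 + (n:ℝ) - Real.sqrt ((n:ℝ)*((n:ℝ)-1))) / (5*(n:ℝ)^2 + 4*(n:ℝ)))) := by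
  have hN : (2:ℝ) ≤ n := by exact_mod_cast hn
  set α := Real.sqrt ((n:ℝ) * (n - 1))
  have hα : α ^ 2 = n * (n - 1) := Real.sq_sqrt (by nlinarith)
  have hα0 : 0 < α := Real.sqrt_pos.mpr (by nlinarith)
  have hlim (i : Fin 4) := tendsto_apply_div_apply_of_smul_eq (by nlinarith)
    (by rw [abs_of_pos (by linarith)]; linarith)
    (by rw [abs_lt, abs_of_pos (by linarith)]; constructor <;> linarith)
    (smul_dabc_eq n hα) i 0 (by simp [eigenvec]; positivity)
  have hden : (5*(n:ℝ)^2 + 4*n) ≠ 0 := by positivity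
  refine ⟨(hlim 1).trans_eq (congrArg nhds ?_), (hlim 2).trans_eq (congrArg nhds ?_),
    (hlim 3).trans_eq (congrArg nhds ?_)⟩ <;>
    rw [div_eq_div_iff (by simp [eigenvec]; positivity) hden] <;> simp [eigenvec]
  · linear_combination (-2*(n:ℝ)^2) * hα
  · linear_combination (-2*(n:ℝ)) * hα
  · linear_combination ((n:ℝ)^2) * hα
end

section
/- For every integer n and every integer k ≥ 0, the integers d'_{n,k}, a'_{n,k}, b'_{n,k}, c'_{n,k} satisfy 3d'_{n,k} − 7b'_{n,k} − (3n+2)c'_{n,k} = 3 and a'_{n,k} = (n+2)c'_{n,k} + 1. -/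
/-!
Both identities are conservation laws: the row vectors `(3, 0, -7, -(3n+2))` and
`(0, 1, 0, -(n+2))` are left eigenvectors of `B_n` for the eigenvalue `1`, so their pairing
with `B_nᵏ v` does not depend on `k`; at `k = 0` the pairings with `v = (1, 1, 0, 0)`
are `3` and `1`.
-/

open Matrix

def BmatZ (n : ℤ) : Matrix (Fin 4) (Fin 4) ℤ :=
  !![8*n^2+27*n+17, -n^2-5*n-6, -21*n^2-70*n-42, -2*n^2-6*n;
     8*n^2+19*n+6,  -n^2-4*n-3, -21*n^2-49*n-14, -2*n^2-4*n;
     8*n+6,         -n-2,       -21*n-15,        -2*n;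
     8*n+3,         -n-2,       -21*n-7,         -2*n+1]

/-- `(d'_{n,k}, a'_{n,k}, b'_{n,k}, c'_{n,k})ᵀ = B_nᵏ (1, 1, 0, 0)ᵀ`. -/
def dabc' (n : ℤ) (k : ℕ) : Fin 4 → ℤ := (BmatZ n ^ k).mulVec ![1, 1, 0, 0]

namespace Matrix

variable {ι R : Type*} [Fintype ι] [DecidableEq ι] [Semiring R]

theorem vecMul_pow_eq_self {A : Matrix ι ι R} {w : ι → R} (h : w ᵥ* A = w) (k : ℕ) :
    w ᵥ* (A ^ k) = w := by
  induction k with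
  | zero => simp
  | succ k ih => rw [pow_succ, ← vecMul_vecMul, ih, h]

theorem dotProduct_pow_mulVec_eq {A : Matrix ι ι R} {w : ι → R} (h : w ᵥ* A = w) (k : ℕ)
    (v : ι → R) : w ⬝ᵥ (A ^ k *ᵥ v) = w ⬝ᵥ v := by
  rw [dotProduct_mulVec, vecMul_pow_eq_self h]

end Matrix

theorem vecMul_BmatZ_dbc (n : ℤ) : ![3, 0, -7, -(3*n+2)] ᵥ* BmatZ n = ![3, 0, -7, -(3*n+2)] := by
  ext i
  fin_cases i <;> simp [BmatZ, vecMul, dotProduct, Fin.sum_univ_four] <;> ring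

theorem vecMul_BmatZ_ac (n : ℤ) : ![0, 1, 0, -(n+2)] ᵥ* BmatZ n = ![0, 1, 0, -(n+2)] := by
  ext i
  fin_cases i <;> simp [BmatZ, vecMul, dotProduct, Fin.sum_univ_four] <;> ring

/-- For every integer `n` and every `k ≥ 0`:
`3d'_{n,k} − 7b'_{n,k} − (3n+2)c'_{n,k} = 3` and `a'_{n,k} = (n+2)c'_{n,k} + 1`. -/
theorem statement_11 (n : ℤ) (k : ℕ) :
    3 * dabc' n k 0 - 7 * dabc' n k 2 - (3*n+2) * dabc' n k 3 = 3 ∧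
    dabc' n k 1 = (n+2) * dabc' n k 3 + 1 := by
  have hdbc := dotProduct_pow_mulVec_eq (vecMul_BmatZ_dbc n) k ![1, 1, 0, 0]
  have hac := dotProduct_pow_mulVec_eq (vecMul_BmatZ_ac n) k ![1, 1, 0, 0]
  rw [← dabc'] at hdbc hac
  simp only [dotProduct, Fin.sum_univ_four, cons_val_zero, cons_val_one, cons_val] at hdbc hac
  constructor <;> linarith
end

section
/- For every integer n ≥ 1 and every integer k ≥ 1, one has 3c'_{n,k} > b'_{n,k} ≥ 0, and consequently c'_{n,k} > 0 and a'_{n,k} > 2. -/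
open Matrix

/-!
The orbit of `(1, 1, 0, 0)` stays on the two affine hyperplanes `a = (n+2)c + 1` and
`3d = (3n+2)c + 7b + 3`, which `B_n` preserves. On them the next values `b₊, c₊` are
`3b₊ = (21n²+16n)c - (7n+3)b + 21n+12` and `3c₊ = (21n²+7n-3)c - 7nb + 21n+3`; writing these
through `3c - b ≥ 0` and `c ≥ 0` shows that for `n ≥ 1` one step maps the closed cone
`0 ≤ b ≤ 3c`, which contains the starting point `b = c = 0`, into `0 ≤ b < 3c`.
-/

lemma dabc'_zero (n : ℤ) : dabc' n 0 = ![1, 1, 0, 0] := by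
  simp [dabc']

lemma dabc'_succ (n : ℤ) (k : ℕ) : dabc' n (k + 1) = BmatZ n *ᵥ dabc' n k := by
  simp [dabc', pow_succ', mulVec_mulVec]

lemma BmatZ_mulVec (n : ℤ) (w : Fin 4 → ℤ) :
    (BmatZ n *ᵥ w) 0 =
      (8*n^2+27*n+17)*w 0 + (-n^2-5*n-6)*w 1 + (-21*n^2-70*n-42)*w 2 + (-2*n^2-6*n)*w 3 ∧
    (BmatZ n *ᵥ w) 1 =
      (8*n^2+19*n+6)*w 0 + (-n^2-4*n-3)*w 1 + (-21*n^2-49*n-14)*w 2 + (-2*n^2-4*n)*w 3 ∧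
    (BmatZ n *ᵥ w) 2 = (8*n+6)*w 0 + (-n-2)*w 1 + (-21*n-15)*w 2 + (-2*n)*w 3 ∧
    (BmatZ n *ᵥ w) 3 = (8*n+3)*w 0 + (-n-2)*w 1 + (-21*n-7)*w 2 + (-2*n+1)*w 3 := by
  refine ⟨?_, ?_, ?_, ?_⟩ <;> simp [BmatZ, mulVec, dotProduct, Fin.sum_univ_four]

/-- The two affine hyperplanes, in coordinates `w = (d, a, b, c)`. -/
def OnInvariantHyperplanes (n : ℤ) (w : Fin 4 → ℤ) : Prop :=
  w 1 = (n + 2) * w 3 + 1 ∧ 3 * w 0 = (3 * n + 2) * w 3 + 7 * w 2 + 3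

lemma OnInvariantHyperplanes.mulVec {n : ℤ} {w : Fin 4 → ℤ} (hw : OnInvariantHyperplanes n w) :
    OnInvariantHyperplanes n (BmatZ n *ᵥ w) := by
  obtain ⟨ha, hd⟩ := hw
  obtain ⟨hv0, hv1, hv2, hv3⟩ := BmatZ_mulVec n w
  constructor
  · linear_combination hv1 - (n + 2) * hv3 + ha
  · linear_combination 3 * hv0 - (3 * n + 2) * hv3 - 7 * hv2 + hd

lemma onInvariantHyperplanes_dabc' (n : ℤ) (k : ℕ) : OnInvariantHyperplanes n (dabc' n k) := by
  induction k with
  | zero => simp [OnInvariantHyperplanes, dabc'_zero]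
  | succ k ih => rw [dabc'_succ]; exact ih.mulVec

lemma OnInvariantHyperplanes.three_mul_mulVec_two {n : ℤ} {w : Fin 4 → ℤ}
    (hw : OnInvariantHyperplanes n w) :
    3 * (BmatZ n *ᵥ w) 2 = (21*n^2 + 16*n) * w 3 - (7*n + 3) * w 2 + 21*n + 12 := by
  linear_combination 3 * (BmatZ_mulVec n w).2.2.1 - 3 * (n + 2) * hw.1 + (8 * n + 6) * hw.2

lemma OnInvariantHyperplanes.three_mul_mulVec_three {n : ℤ} {w : Fin 4 → ℤ}
    (hw : OnInvariantHyperplanes n w) :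
    3 * (BmatZ n *ᵥ w) 3 = (21*n^2 + 7*n - 3) * w 3 - 7*n * w 2 + 21*n + 3 := by
  linear_combination 3 * (BmatZ_mulVec n w).2.2.2 - 3 * (n + 2) * hw.1 + (8 * n + 3) * hw.2

lemma OnInvariantHyperplanes.mulVec_mem_cone {n : ℤ} (hn : 1 ≤ n) {w : Fin 4 → ℤ}
    (hw : OnInvariantHyperplanes n w) (hb : 0 ≤ w 2) (hbc : w 2 ≤ 3 * w 3) :
    0 ≤ (BmatZ n *ᵥ w) 2 ∧ (BmatZ n *ᵥ w) 2 < 3 * (BmatZ n *ᵥ w) 3 := by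
  have hb' := hw.three_mul_mulVec_two
  have hc' := hw.three_mul_mulVec_three
  have hc : 0 ≤ w 3 := by linarith
  have hgap : 0 ≤ 3 * w 3 - w 2 := by linarith
  have h1 : 0 ≤ (7*n + 3) * (3 * w 3 - w 2) := mul_nonneg (by linarith) hgap
  have h2 : 0 ≤ (21*n^2 - 5*n - 9) * w 3 := mul_nonneg (by nlinarith) hc
  have h3 : 0 ≤ (14*n - 3) * (3 * w 3 - w 2) := mul_nonneg (by linarith) hgap
  have h4 : 0 ≤ (42*n^2 - 37*n) * w 3 := mul_nonneg (by nlinarith) hc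
  constructor <;> linarith

lemma dabc'_mem_cone (n : ℤ) (hn : 1 ≤ n) (k : ℕ) :
    0 ≤ dabc' n k 2 ∧ dabc' n k 2 ≤ 3 * dabc' n k 3 := by
  induction k with
  | zero => simp [dabc'_zero]
  | succ k ih =>
    rw [dabc'_succ]
    obtain ⟨hb, hbc⟩ := (onInvariantHyperplanes_dabc' n k).mulVec_mem_cone hn ih.1 ih.2
    exact ⟨hb, hbc.le⟩

/-- For every integer `n ≥ 1` and every integer `k ≥ 1`:
`3c'_{n,k} > b'_{n,k} ≥ 0`, and consequently `c'_{n,k} > 0` and `a'_{n,k} > 2`. -/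
theorem statement_12 (n : ℤ) (hn : 1 ≤ n) (k : ℕ) (hk : 1 ≤ k) :
    3 * dabc' n k 3 > dabc' n k 2 ∧ dabc' n k 2 ≥ 0 ∧
    dabc' n k 3 > 0 ∧ dabc' n k 1 > 2 := by
  obtain ⟨m, rfl⟩ := Nat.exists_eq_add_of_le' hk
  obtain ⟨hb, hbc⟩ := dabc'_mem_cone n hn m
  obtain ⟨hb', hbc'⟩ := (onInvariantHyperplanes_dabc' n m).mulVec_mem_cone hn hb hbc
  have ha := (onInvariantHyperplanes_dabc' n (m + 1)).1
  rw [dabc'_succ] at ha ⊢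
  have hc : 0 < (BmatZ n *ᵥ dabc' n m) 3 := by linarith
  refine ⟨hbc', hb', hc, ?_⟩
  nlinarith
end

section
/- For every integer n ≥ 1, the inequality 14n(8n² + 27n + 16)·√(n² + 6n + 10) < (n+2)²·7n(9n + β_n + 6) + 7·n(21n² − 3nβ_n + 126n − 2β_n + 84) + 2n·7n(9n + β_n + 6) holds; equivalently, the class W⁺_sq2 of degree 14n(8n²+27n+16) on the blow-up at s = (n+3)² + 2 points, with (n+2)² points of multiplicity 7n(9n+β_n+6), seven points of multiplicity n(21n²−3nβ_n+126n−2β_n+84), and 2n points of multiplicity 7n(9n+β_n+6), is De Fernex negative. -/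
/-!
Writing `x = n`, `t = √(x² + 6x + 10)` and `β = √(49x² − 28)`, the right-hand side minus the
left-hand side equals `7x · ((9x + 27)(x² + 6x + 4) + (x + 1)(x + 2) β − 2(8x² + 27x + 16) t)`.
The two square roots are replaced by rational bounds, `t ≤ u + 1/(2u)` with `u = x + 3` and
`β ≥ 7x − 2/x − 1/(2x³)` (the first two Taylor terms of `β` at infinity, with a slightly
enlarged second coefficient). The remaining rational inequality has numerator
`16x⁵ + 54x⁴ − 5x³ − 30x² − 11x − 6`, which is positive for `x ≥ 1`. The case `n = 1` is
nearly tight, which is why the bounds keep their second-order terms.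
-/

theorem sqrt_sq_add_le_add_div {a c : ℝ} (ha : 0 < a) (hc : 0 ≤ c) :
    √(a ^ 2 + c) ≤ a + c / (2 * a) := by
  rw [Real.sqrt_le_iff]
  refine ⟨by positivity, ?_⟩
  have hsq : (a + c / (2 * a)) ^ 2 = a ^ 2 + c + (c / (2 * a)) ^ 2 := by
    field_simp
    ring
  nlinarith [sq_nonneg (c / (2 * a))]

theorem sub_div_le_sqrt_49_mul_sq_sub_28 {x : ℝ} (hx : 1 ≤ x) :
    7 * x - 2 / x - 1 / (2 * x ^ 3) ≤ √(49 * x ^ 2 - 28) := by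
  refine (le_abs_self _).trans (Real.abs_le_sqrt ?_)
  have hx0 : 0 < x := by linarith
  have hx2 : 1 ≤ x ^ 2 := one_le_pow₀ hx
  have hdiff : 49 * x ^ 2 - 28 - (7 * x - 2 / x - 1 / (2 * x ^ 3)) ^ 2
      = (12 * x ^ 4 - 8 * x ^ 2 - 1) / (4 * x ^ 6) := by
    field_simp
    ring
  have hnum : 0 ≤ 12 * x ^ 4 - 8 * x ^ 2 - 1 := by nlinarith
  have := div_nonneg hnum (by positivity : (0 : ℝ) ≤ 4 * x ^ 6)
  linarith

theorem rational_bound_of_one_le {x : ℝ} (hx : 1 ≤ x) :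
    2 * (8 * x ^ 2 + 27 * x + 16) * (x + 3 + 1 / (2 * (x + 3)))
      < (9 * x + 27) * (x ^ 2 + 6 * x + 4)
        + (x + 1) * (x + 2) * (7 * x - 2 / x - 1 / (2 * x ^ 3)) := by
  have hx0 : 0 < x := by linarith
  rw [← sub_pos]
  have hdiff : (9 * x + 27) * (x ^ 2 + 6 * x + 4)
        + (x + 1) * (x + 2) * (7 * x - 2 / x - 1 / (2 * x ^ 3))
        - 2 * (8 * x ^ 2 + 27 * x + 16) * (x + 3 + 1 / (2 * (x + 3)))
      = (16 * x ^ 5 + 54 * x ^ 4 - 5 * x ^ 3 - 30 * x ^ 2 - 11 * x - 6)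
          / (2 * x ^ 3 * (x + 3)) := by
    field_simp
    ring
  have hnum : 0 < 16 * x ^ 5 + 54 * x ^ 4 - 5 * x ^ 3 - 30 * x ^ 2 - 11 * x - 6 := by
    nlinarith [pow_le_pow_left₀ zero_le_one hx 3, pow_le_pow_left₀ zero_le_one hx 4,
      pow_le_pow_left₀ zero_le_one hx 5]
  rw [hdiff]
  positivity

/-- For every integer `n ≥ 1`, with `β_n = √(49n² − 28)`, the inequality
`14n(8n² + 27n + 16)·√(n² + 6n + 10)
  < (n+2)²·7n(9n + β_n + 6) + 7·n(21n² − 3nβ_n + 126n − 2β_n + 84) + 2n·7n(9n + β_n + 6)`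
holds; i.e. the class `W⁺_sq2` on the blow-up at `s = (n+3)² + 2` points is
De Fernex negative. -/
theorem statement_18 (n : ℤ) (hn : 1 ≤ n) :
    14*(n:ℝ)*(8*(n:ℝ)^2 + 27*(n:ℝ) + 16) * Real.sqrt ((n:ℝ)^2 + 6*(n:ℝ) + 10)
      < ((n:ℝ)+2)^2 * (7*(n:ℝ)*(9*(n:ℝ) + Real.sqrt (49*(n:ℝ)^2 - 28) + 6))
        + 7 * ((n:ℝ)*(21*(n:ℝ)^2 - 3*(n:ℝ)*Real.sqrt (49*(n:ℝ)^2 - 28) + 126*(n:ℝ)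
            - 2*Real.sqrt (49*(n:ℝ)^2 - 28) + 84))
        + 2*(n:ℝ) * (7*(n:ℝ)*(9*(n:ℝ) + Real.sqrt (49*(n:ℝ)^2 - 28) + 6)) := by
  have hx : (1 : ℝ) ≤ n := by exact_mod_cast hn
  set x : ℝ := (n : ℝ)
  have ht : √(x ^ 2 + 6 * x + 10) ≤ x + 3 + 1 / (2 * (x + 3)) := by
    have := sqrt_sq_add_le_add_div (a := x + 3) (by linarith) zero_le_one
    rwa [show (x + 3) ^ 2 + 1 = x ^ 2 + 6 * x + 10 by ring] at this
  have key : 2 * (8 * x ^ 2 + 27 * x + 16) * √(x ^ 2 + 6 * x + 10)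
      < (9 * x + 27) * (x ^ 2 + 6 * x + 4) + (x + 1) * (x + 2) * √(49 * x ^ 2 - 28) :=
    calc _ ≤ 2 * (8 * x ^ 2 + 27 * x + 16) * (x + 3 + 1 / (2 * (x + 3))) := by gcongr
      _ < (9 * x + 27) * (x ^ 2 + 6 * x + 4)
            + (x + 1) * (x + 2) * (7 * x - 2 / x - 1 / (2 * x ^ 3)) :=
          rational_bound_of_one_le hx
      _ ≤ _ := by gcongr; exact sub_div_le_sqrt_49_mul_sq_sub_28 hx
  linarith [mul_lt_mul_of_pos_left key (by linarith : (0 : ℝ) < 7 * x)]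
end

section
/- For every integer n ≥ 1, the inequality 14n(8n² + 27n + 16)·√(n² + 4n + 7) < (n+1)²·(7n(n+2)/(n+1))(9n + β_n + 6) + 7·n(21n² − 3nβ_n + 126n − 2β_n + 84) + 2n·7n(9n + β_n + 6) holds; equivalently, the class W⁺_sq4 of degree 14n(8n²+27n+16) on the blow-up at s = (n+2)² + 4 points, with (n+1)² points of multiplicity 7n((n+2)/(n+1))(9n+β_n+6), seven points of multiplicity n(21n²−3nβ_n+126n−2β_n+84), and 2n points of multiplicity 7n(9n+β_n+6), is De Fernex negative. -/
/-!
Write `x = n`, `α = √(x² + 4x + 7)` and `β = √(49x² − 28)`. After clearing the denominator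
`x + 1`, the right-hand side is `7x(9x³ + 72x² + 174x + 96 + x(x + 2)β)`, so the claim reduces to
`2(8x² + 27x + 16)α < 9x³ + 72x² + 174x + 96 + x(x + 2)β`. Both square roots are replaced by
rational bounds: `2(x + 2)α ≤ 2(x + 2)² + 3` (tangent line of `√` at `(x + 2)²`) and
`xβ ≥ 7x² − 3`. What remains is a polynomial inequality whose slack is `7x² + 7x + 4 > 0`.
-/

open Real

lemma two_mul_mul_sqrt_sq_add_le {t c : ℝ} (ht : 0 ≤ t) (hc : 0 ≤ c) :
    2 * t * √(t ^ 2 + c) ≤ 2 * t ^ 2 + c := by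
  have hsq : (2 * t * √(t ^ 2 + c)) ^ 2 ≤ (2 * t ^ 2 + c) ^ 2 := by
    rw [mul_pow, sq_sqrt (by positivity)]
    nlinarith [sq_nonneg c]
  exact (pow_le_pow_iff_left₀ (by positivity) (by positivity) two_ne_zero).mp hsq

lemma seven_mul_sq_sub_three_le_mul_sqrt {x : ℝ} (hx : 1 ≤ x) :
    7 * x ^ 2 - 3 ≤ x * √(49 * x ^ 2 - 28) := by
  calc 7 * x ^ 2 - 3 ≤ √(x ^ 2 * (49 * x ^ 2 - 28)) := le_sqrt_of_sq_le (by nlinarith)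
    _ = x * √(49 * x ^ 2 - 28) := by rw [sqrt_mul (sq_nonneg x), sqrt_sq (by linarith)]

lemma rhs_regroup {x : ℝ} (hx : x + 1 ≠ 0) (b : ℝ) :
    (x + 1) ^ 2 * ((7 * x * (x + 2) / (x + 1)) * (9 * x + b + 6))
        + 7 * (x * (21 * x ^ 2 - 3 * x * b + 126 * x - 2 * b + 84))
        + 2 * x * (7 * x * (9 * x + b + 6))
      = 7 * x * (9 * x ^ 3 + 72 * x ^ 2 + 174 * x + 96 + x * (x + 2) * b) := by
  rw [← mul_assoc, sq, mul_assoc (x + 1), mul_div_cancel₀ _ hx]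
  ring

lemma reduced_inequality {x : ℝ} (hx : 1 ≤ x) :
    2 * (8 * x ^ 2 + 27 * x + 16) * √(x ^ 2 + 4 * x + 7)
      < 9 * x ^ 3 + 72 * x ^ 2 + 174 * x + 96 + x * (x + 2) * √(49 * x ^ 2 - 28) := by
  have hα : 2 * (x + 2) * √(x ^ 2 + 4 * x + 7) ≤ 2 * (x + 2) ^ 2 + 3 := by
    have h := two_mul_mul_sqrt_sq_add_le (by linarith : 0 ≤ x + 2) (zero_le_three : (0 : ℝ) ≤ 3)
    rwa [show (x + 2) ^ 2 + 3 = x ^ 2 + 4 * x + 7 by ring] at h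
  have hβ := seven_mul_sq_sub_three_le_mul_sqrt hx
  refine lt_of_mul_lt_mul_left ?_ (by linarith : 0 ≤ x + 2)
  calc (x + 2) * (2 * (8 * x ^ 2 + 27 * x + 16) * √(x ^ 2 + 4 * x + 7))
        = (8 * x ^ 2 + 27 * x + 16) * (2 * (x + 2) * √(x ^ 2 + 4 * x + 7)) := by ring
    _ ≤ (8 * x ^ 2 + 27 * x + 16) * (2 * (x + 2) ^ 2 + 3) := by gcongr
    _ < (x + 2) * (9 * x ^ 3 + 72 * x ^ 2 + 174 * x + 96 + (x + 2) * (7 * x ^ 2 - 3)) := by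
        nlinarith
    _ ≤ (x + 2) * (9 * x ^ 3 + 72 * x ^ 2 + 174 * x + 96 + (x + 2) * (x * √(49 * x ^ 2 - 28))) := by
        gcongr
    _ = (x + 2) * (9 * x ^ 3 + 72 * x ^ 2 + 174 * x + 96 + x * (x + 2) * √(49 * x ^ 2 - 28)) := by
        ring

/-- For every integer `n ≥ 1`, with `β_n = √(49n² − 28)`, the inequality
`14n(8n² + 27n + 16)·√(n² + 4n + 7)
  < (n+1)²·(7n(n+2)/(n+1))(9n + β_n + 6) + 7·n(21n² − 3nβ_n + 126n − 2β_n + 84)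
    + 2n·7n(9n + β_n + 6)`
holds; i.e. the class `W⁺_sq4` on the blow-up at `s = (n+2)² + 4` points is
De Fernex negative. -/
theorem statement_19 (n : ℤ) (hn : 1 ≤ n) :
    14*(n:ℝ)*(8*(n:ℝ)^2 + 27*(n:ℝ) + 16) * Real.sqrt ((n:ℝ)^2 + 4*(n:ℝ) + 7)
      < ((n:ℝ)+1)^2 * ((7*(n:ℝ)*((n:ℝ)+2)/((n:ℝ)+1)) * (9*(n:ℝ) + Real.sqrt (49*(n:ℝ)^2 - 28) + 6))
        + 7 * ((n:ℝ)*(21*(n:ℝ)^2 - 3*(n:ℝ)*Real.sqrt (49*(n:ℝ)^2 - 28) + 126*(n:ℝ)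
            - 2*Real.sqrt (49*(n:ℝ)^2 - 28) + 84))
        + 2*(n:ℝ) * (7*(n:ℝ)*(9*(n:ℝ) + Real.sqrt (49*(n:ℝ)^2 - 28) + 6)) := by
  have hx : (1 : ℝ) ≤ n := by exact_mod_cast hn
  rw [rhs_regroup (by linarith) _]
  calc 14 * (n : ℝ) * (8 * (n : ℝ) ^ 2 + 27 * n + 16) * √((n : ℝ) ^ 2 + 4 * n + 7)
        = 7 * n * (2 * (8 * (n : ℝ) ^ 2 + 27 * n + 16) * √((n : ℝ) ^ 2 + 4 * n + 7)) := by ring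
    _ < _ := mul_lt_mul_of_pos_left (reduced_inequality hx) (by linarith)
end
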